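/- arXiv:2304.01764 — 9 statements merged into one kernel-verified Lean document; each statement's English description precedes it below -/
import Mathlib

section
/- Let G = (V,E) be an undirected simple graph on n vertices and let Gℓ be its symmetrization. Then for every bijection φ : {1,…,n} → V, the vertex separation and the number of running buffers satisfy VS(G,φ) ≤ RB(Gℓ,φ) ≤ VS(G,φ) + 1. -/
open scoped Classical

/-- For a digraph with arc relation `A` on `V` and a set `S` of vertices,
`buffered A S` is the set of vertices of `S` having an arc to some vertex outside `S`. -/
noncomputable def buffered {V : Type*} [Fintype V] (A : V → V → Prop) (S : Finset V) :
    Finset V :=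
  S.filter (fun u => ∃ v, v ∉ S ∧ A u v)

/-- The number of running buffers of a linear ordering `φ` of the vertices of a digraph
with arc relation `A` : the maximum over positions `i` of the number of buffered vertices
among the first `i - 1` vertices, plus `1` if the `i`-th vertex is itself buffered with
respect to the first `i` vertices. -/
noncomputable def RB {V : Type*} [Fintype V] (A : V → V → Prop) {n : ℕ} (φ : Fin n → V) :
    ℕ :=
  Finset.univ.sup (fun i : Fin n =>
    (buffered A ((Finset.univ.filter (fun j : Fin n => j < i)).image φ)).card +
      (if φ i ∈ buffered A ((Finset.univ.filter (fun j : Fin n => j ≤ i)).image φ)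
        then 1 else 0))

/-- The vertex separation of a linear ordering `φ` of the vertices of an undirected simple
graph `G` : the maximum over positions `i` of the number of vertices among the first `i`
vertices having an edge to a vertex not among the first `i` vertices. -/
noncomputable def VS {V : Type*} [Fintype V] (G : SimpleGraph V) {n : ℕ} (φ : Fin n → V) :
    ℕ :=
  Finset.univ.sup (fun i : Fin n =>
    (((Finset.univ.filter (fun j : Fin n => j ≤ i)).image φ).filter
      (fun u => ∃ v, v ∉ (Finset.univ.filter (fun j : Fin n => j ≤ i)).image φ ∧
        G.Adj u v)).card)

lemma buffered_subset_insert {V : Type*} [Fintype V] (A : V → V → Prop) {P T : Finset V}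
    (x : V) (hPT : P ⊆ T) (hTP : T ⊆ insert x P) :
    buffered A T ⊆ insert x (buffered A P) := by
  intro u hu
  simp only [buffered, Finset.mem_filter] at hu
  obtain ⟨huT, v, hv, hav⟩ := hu
  rcases Finset.mem_insert.1 (hTP huT) with h | h
  · exact h ▸ Finset.mem_insert_self _ _
  · exact Finset.mem_insert_of_mem
      (Finset.mem_filter.2 ⟨h, v, fun hvP => hv (hPT hvP), hav⟩)

lemma card_buffered_le {V : Type*} [Fintype V] (A : V → V → Prop) {P T : Finset V}
    (x : V) (hPT : P ⊆ T) (hTP : T ⊆ insert x P) :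
    (buffered A T).card ≤ (buffered A P).card + (if x ∈ buffered A T then 1 else 0) := by
  by_cases hx : x ∈ buffered A T
  · rw [if_pos hx]
    calc (buffered A T).card ≤ (insert x (buffered A P)).card :=
          Finset.card_le_card (buffered_subset_insert A x hPT hTP)
      _ ≤ (buffered A P).card + 1 := Finset.card_insert_le _ _
  · rw [if_neg hx, Nat.add_zero]
    apply Finset.card_le_card
    intro u hu
    rcases Finset.mem_insert.1 (buffered_subset_insert A x hPT hTP hu) with h | h
    · exact absurd (h ▸ hu) hx
    · exact h

lemma buffered_adj_eq {V : Type*} [Fintype V] (G : SimpleGraph V) (S : Finset V) :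
    buffered (fun u v => G.Adj u v) S =
      S.filter (fun u => ∃ v, v ∉ S ∧ G.Adj u v) := rfl

/-- For every undirected simple graph `G` and every linear ordering `φ` of its vertices,
`VS(G,φ) ≤ RB(Gℓ,φ) ≤ VS(G,φ) + 1`, where `Gℓ` is the symmetrization of `G`. -/
theorem vs_le_rb_le_vs_add_one {V : Type*} [Fintype V] (G : SimpleGraph V)
    (φ : Fin (Fintype.card V) → V) (hφ : Function.Bijective φ) :
    VS G φ ≤ RB (fun u v => G.Adj u v) φ ∧
      RB (fun u v => G.Adj u v) φ ≤ VS G φ + 1 := by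
  classical
  have hPT : ∀ i : Fin (Fintype.card V),
      (Finset.univ.filter (fun j => j < i)).image φ ⊆
        (Finset.univ.filter (fun j => j ≤ i)).image φ := by
    intro i
    apply Finset.image_subset_image
    intro j hj
    simp only [Finset.mem_filter, Finset.mem_univ, true_and] at hj ⊢
    exact le_of_lt hj
  have hTP : ∀ i : Fin (Fintype.card V),
      (Finset.univ.filter (fun j => j ≤ i)).image φ ⊆
        insert (φ i) ((Finset.univ.filter (fun j => j < i)).image φ) := by
    intro i u hu
    simp only [Finset.mem_image, Finset.mem_filter, Finset.mem_univ, true_and] at hu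
    obtain ⟨j, hj, rfl⟩ := hu
    rcases lt_or_eq_of_le hj with h | h
    · exact Finset.mem_insert_of_mem (Finset.mem_image.2 ⟨j, by simp [h], rfl⟩)
    · exact h ▸ Finset.mem_insert_self _ _
  constructor
  · unfold VS RB
    apply Finset.sup_le
    intro i _
    refine le_trans ?_ (Finset.le_sup (Finset.mem_univ i))
    rw [← buffered_adj_eq]
    exact card_buffered_le _ (φ i) (hPT i) (hTP i)
  · unfold VS RB
    apply Finset.sup_le
    intro i _
    have hite : (if φ i ∈ buffered (fun u v => G.Adj u v)
        ((Finset.univ.filter (fun j => j ≤ i)).image φ) then 1 else 0) ≤ 1 := by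
      split <;> simp
    have hmain : (buffered (fun u v => G.Adj u v)
        ((Finset.univ.filter (fun j => j < i)).image φ)).card ≤
        Finset.univ.sup (fun i : Fin (Fintype.card V) =>
          (((Finset.univ.filter (fun j => j ≤ i)).image φ).filter
            (fun u => ∃ v, v ∉ (Finset.univ.filter (fun j => j ≤ i)).image φ ∧
              G.Adj u v)).card) := by
      by_cases h0 : i.val = 0
      · have hempty : (Finset.univ.filter (fun j => j < i) :
            Finset (Fin (Fintype.card V))) = ∅ := by
          apply Finset.filter_false_of_mem
          intro j _
          simp only [Fin.lt_def, h0]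
          omega
        simp [hempty, buffered]
      · set i' : Fin (Fintype.card V) :=
          ⟨i.val - 1, lt_of_le_of_lt (Nat.pred_le _) i.isLt⟩ with hi'
        have heq : (Finset.univ.filter (fun j => j < i) :
            Finset (Fin (Fintype.card V))) = Finset.univ.filter (fun j => j ≤ i') := by
          ext j
          simp only [Finset.mem_filter, Finset.mem_univ, true_and, Fin.lt_def, Fin.le_def,
            hi']
          omega
        rw [heq, buffered_adj_eq]
        exact Finset.le_sup (f := fun i : Fin (Fintype.card V) =>
          (((Finset.univ.filter (fun j => j ≤ i)).image φ).filter
            (fun u => ∃ v, v ∉ (Finset.univ.filter (fun j => j ≤ i)).image φ ∧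
              G.Adj u v)).card) (Finset.mem_univ i')
    omega
end

section
/- Let G = (V,E) be an undirected simple graph on n vertices and let Gℓ be its symmetrization. Then MinVS(G) ≤ MRB(Gℓ) ≤ MinVS(G) + 1. -/
open scoped Classical

/-- The minimum number of running buffers of a digraph with arc relation `A` : the minimum
of `RB A φ` over all linear orderings (bijections) `φ` of the vertex set. -/
noncomputable def MRB {V : Type*} [Fintype V] (A : V → V → Prop) : ℕ :=
  sInf {k | ∃ φ : Fin (Fintype.card V) → V, Function.Bijective φ ∧ RB A φ = k}

/-- The vertex separation number of `G` : the minimum of `VS G φ` over all linear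
orderings (bijections) `φ` of the vertex set. -/
noncomputable def MinVS {V : Type*} [Fintype V] (G : SimpleGraph V) : ℕ :=
  sInf {k | ∃ φ : Fin (Fintype.card V) → V, Function.Bijective φ ∧ VS G φ = k}

lemma vs_le_rb {V : Type*} [Fintype V] (G : SimpleGraph V) {n : ℕ} (φ : Fin n → V) :
    VS G φ ≤ RB (fun u v => G.Adj u v) φ := by
  apply Finset.sup_le
  intro i _
  refine le_trans ?_ (Finset.le_sup (f := fun i : Fin n =>
    (buffered (fun u v => G.Adj u v) ((Finset.univ.filter (fun j : Fin n => j < i)).image φ)).card +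
      (if φ i ∈ buffered (fun u v => G.Adj u v)
          ((Finset.univ.filter (fun j : Fin n => j ≤ i)).image φ) then 1 else 0))
    (Finset.mem_univ i))
  set A : V → V → Prop := fun u v => G.Adj u v with hA
  set P := (Finset.univ.filter (fun j : Fin n => j < i)).image φ with hP
  set Q := (Finset.univ.filter (fun j : Fin n => j ≤ i)).image φ with hQ
  have hPQ : P ⊆ Q := by
    apply Finset.image_subset_image
    intro j hj
    simp only [Finset.mem_filter, Finset.mem_univ, true_and] at hj ⊢
    exact le_of_lt hj
  have hVSterm : (Q.filter (fun u => ∃ v, v ∉ Q ∧ G.Adj u v)) = buffered A Q := rfl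
  rw [hVSterm]
  have key : ∀ u ∈ buffered A Q, u = φ i ∨ u ∈ buffered A P := by
    intro u hu
    simp only [buffered, Finset.mem_filter] at hu
    obtain ⟨huQ, v, hv, hadj⟩ := hu
    rw [hQ] at huQ
    simp only [Finset.mem_image, Finset.mem_filter, Finset.mem_univ, true_and] at huQ
    obtain ⟨j, hj, rfl⟩ := huQ
    rcases eq_or_lt_of_le hj with rfl | hj
    · exact Or.inl rfl
    · right
      simp only [buffered, Finset.mem_filter]
      refine ⟨?_, v, fun hvP => hv (hPQ hvP), hadj⟩
      rw [hP]
      exact Finset.mem_image.mpr ⟨j, by simp [hj], rfl⟩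
  by_cases h : φ i ∈ buffered A Q
  · simp only [h, if_true]
    have hsub : buffered A Q ⊆ insert (φ i) (buffered A P) := by
      intro u hu
      rcases key u hu with rfl | hu'
      · exact Finset.mem_insert_self _ _
      · exact Finset.mem_insert_of_mem hu'
    calc (buffered A Q).card ≤ (insert (φ i) (buffered A P)).card :=
          Finset.card_le_card hsub
      _ ≤ (buffered A P).card + 1 := Finset.card_insert_le _ _
  · simp only [h, if_false, add_zero]
    apply Finset.card_le_card
    intro u hu
    rcases key u hu with rfl | hu'
    · exact absurd hu h
    · exact hu'

lemma rb_le_vs_add_one {V : Type*} [Fintype V] (G : SimpleGraph V) {n : ℕ} (φ : Fin n → V) :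
    RB (fun u v => G.Adj u v) φ ≤ VS G φ + 1 := by
  apply Finset.sup_le
  intro i _
  set A : V → V → Prop := fun u v => G.Adj u v with hA
  have hbuf : (buffered A ((Finset.univ.filter (fun j : Fin n => j < i)).image φ)).card
      ≤ VS G φ := by
    rcases Nat.eq_zero_or_eq_succ_pred i.val with h0 | hsucc
    · have : (Finset.univ.filter (fun j : Fin n => j < i)) = ∅ := by
        apply Finset.filter_eq_empty_iff.mpr
        intro j _
        simp only [Fin.lt_def, h0]
        omega
      simp [this, buffered]
    · set m := i.val - 1 with hm
      have hmlt : m < n := lt_of_le_of_lt (Nat.sub_le _ _) i.isLt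
      set i' : Fin n := ⟨m, hmlt⟩ with hi'
      have hset : (Finset.univ.filter (fun j : Fin n => j < i))
          = (Finset.univ.filter (fun j : Fin n => j ≤ i')) := by
        apply Finset.filter_congr
        intro j _
        simp only [Fin.lt_def, Fin.le_def, hi', eq_iff_iff]
        omega
      rw [hset]
      refine le_trans ?_ (Finset.le_sup (f := fun i : Fin n =>
        (((Finset.univ.filter (fun j : Fin n => j ≤ i)).image φ).filter
          (fun u => ∃ v, v ∉ (Finset.univ.filter (fun j : Fin n => j ≤ i)).image φ ∧
            G.Adj u v)).card) (Finset.mem_univ i'))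
      exact le_of_eq rfl
  have hind : (if φ i ∈ buffered A ((Finset.univ.filter (fun j : Fin n => j ≤ i)).image φ)
      then 1 else 0) ≤ 1 := by split <;> omega
  omega

/-- For every undirected simple graph `G`, `MinVS(G) ≤ MRB(Gℓ) ≤ MinVS(G) + 1`, where
`Gℓ` is the symmetrization of `G`. -/
theorem minVS_le_mrb_le_minVS_add_one {V : Type*} [Fintype V] (G : SimpleGraph V) :
    MinVS G ≤ MRB (fun u v => G.Adj u v) ∧
      MRB (fun u v => G.Adj u v) ≤ MinVS G + 1 := by
  have hcard : Fintype.card V = Fintype.card V := rfl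
  set A : V → V → Prop := fun u v => G.Adj u v with hA
  have hne1 : {k | ∃ φ : Fin (Fintype.card V) → V, Function.Bijective φ ∧ RB A φ = k}.Nonempty := by
    exact ⟨_, (Fintype.equivFin V).symm, (Fintype.equivFin V).symm.bijective, rfl⟩
  have hne2 : {k | ∃ φ : Fin (Fintype.card V) → V, Function.Bijective φ ∧ VS G φ = k}.Nonempty := by
    exact ⟨_, (Fintype.equivFin V).symm, (Fintype.equivFin V).symm.bijective, rfl⟩
  constructor
  · obtain ⟨φ, hb, hRB⟩ := Nat.sInf_mem hne1
    calc MinVS G ≤ VS G φ := Nat.sInf_le ⟨φ, hb, rfl⟩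
      _ ≤ RB A φ := vs_le_rb G φ
      _ = MRB A := hRB
  · obtain ⟨ψ, hb, hVS⟩ := Nat.sInf_mem hne2
    calc MRB A ≤ RB A ψ := Nat.sInf_le ⟨ψ, hb, rfl⟩
      _ ≤ VS G ψ + 1 := rb_le_vs_add_one G ψ
      _ = MinVS G + 1 := by rw [hVS]; rfl
end

section
/- There exists a constant c > 0 such that for every integer m ≥ 2, the unlabeled minimum number of running buffers of the dependency grid D(m,2m) satisfies uMRB(D(m,2m)) ≥ c·m; equivalently, writing n = m² for the number of start (respectively goal) vertices of D(m,2m), uMRB(D(m,2m)) = Ω(√n). -/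
open scoped Classical

/-- Two grid vertices (coordinates in `ℕ × ℕ`) are adjacent iff their `L¹` distance is `1`. -/
def gridAdj (a b : ℕ × ℕ) : Prop := Nat.dist a.1 b.1 + Nat.dist a.2 b.2 = 1

/-- The vertex set of the dependency grid `D(m, 2m)`, with `0`-based coordinates. -/
def gridVerts (m : ℕ) : Finset (ℕ × ℕ) := (Finset.range m) ×ˢ (Finset.range (2 * m))

/-- The start vertices of `D(m, 2m)`: those whose coordinate sum is even
(so that the vertex `(1,1)` of the `1`-based description, i.e. `(0,0)` here, is a start). -/
def gridStarts (m : ℕ) : Finset (ℕ × ℕ) := (gridVerts m).filter (fun v => Even (v.1 + v.2))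

/-- The goal vertices of `D(m, 2m)`: those whose coordinate sum is odd. -/
def gridGoals (m : ℕ) : Finset (ℕ × ℕ) := (gridVerts m).filter (fun v => Odd (v.1 + v.2))

/-- `gridN m g` is the set of start vertices of `D(m, 2m)` adjacent to some vertex of `g`. -/
noncomputable def gridN (m : ℕ) (g : Finset (ℕ × ℕ)) : Finset (ℕ × ℕ) :=
  (gridStarts m).filter (fun s => ∃ t ∈ g, gridAdj s t)

/-- The number of running buffers of a linear ordering `π` of the `m * m` goal vertices of
`D(m, 2m)`: the maximum over `0 ≤ i ≤ m*m` of `max (0, |N(g_i)| - i)` (truncated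
subtraction), where `g_i` is the set of the first `i` goals in the ordering. -/
noncomputable def gridURB (m : ℕ) (π : Fin (m * m) → ℕ × ℕ) : ℕ :=
  (Finset.range (m * m + 1)).sup (fun i =>
    (gridN m ((Finset.univ.filter (fun j : Fin (m * m) => (j : ℕ) < i)).image π)).card - i)

/-- The unlabeled minimum number of running buffers of the dependency grid `D(m, 2m)`:
the minimum of `gridURB m π` over all bijections `π` from `Fin (m*m)` onto the goal
vertices. -/
noncomputable def gridUMRB (m : ℕ) : ℕ :=
  sInf {k | ∃ π : Fin (m * m) → ℕ × ℕ, Function.Injective π ∧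
    Finset.image π Finset.univ = gridGoals m ∧ gridURB m π = k}

open Finset

/-!
Group the vertices `(x, 2j)` and `(x, 2j + 1)` of column `x` into a domino: it holds one goal
and one start, and they are adjacent, so the starts of the dominoes of a goal set `g` lie in
`N(g)`. So does the start of every domino outside `g` adjacent to a goal of `g`; call these
dominoes the boundary of `g`. When `g` consists of the first `m² / 2` goals of any ordering,
the boundary has at least `m / 2` dominoes: if some domino row lies in `g` and another
misses `g`, every column of the right parity crosses from `g` to its complement, and
otherwise at least `m / 2` domino rows meet both `g` and its complement, each contributing a
horizontal boundary domino. Hence `|N(g)| - |g| ≥ m / 2` for every ordering.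
-/

theorem Nat.exists_transition {p : ℕ → Prop} {a b : ℕ} (hab : a < b) (ha : p a) (hb : ¬ p b) :
    ∃ t, a ≤ t ∧ t < b ∧ p t ∧ ¬ p (t + 1) := by
  induction b, hab using Nat.le_induction with
  | base => exact ⟨a, le_rfl, lt_add_one a, ha, hb⟩
  | succ b hab ih =>
    by_cases hpb : p b
    · exact ⟨b, by omega, lt_add_one b, hpb, hb⟩
    · obtain ⟨t, hat, htb, hpt, hpt'⟩ := ih hpb
      exact ⟨t, hat, by omega, hpt, hpt'⟩

theorem Finset.exists_injective_image_univ_eq {α : Type*} [DecidableEq α] {s : Finset α}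
    {n : ℕ} (h : #s = n) : ∃ π : Fin n → α, Function.Injective π ∧ univ.image π = s := by
  let e := s.equivFinOfCardEq h
  refine ⟨Subtype.val ∘ e.symm, Subtype.val_injective.comp e.symm.injective, ?_⟩
  ext a
  simp only [mem_image, mem_univ, true_and, Function.comp_apply]
  exact ⟨fun ⟨i, hi⟩ => hi ▸ (e.symm i).2, fun ha => ⟨e ⟨a, ha⟩, by simp⟩⟩

/-- Cell `(x, j)` is the domino `{(x, 2j), (x, 2j + 1)}`; its goal is the vertex of odd
coordinate sum. -/
def gridCells (m : ℕ) : Finset (ℕ × ℕ) := range m ×ˢ range m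

def dominoGoal (c : ℕ × ℕ) : ℕ × ℕ := (c.1, 2 * c.2 + 1 - c.1 % 2)

def dominoStart (c : ℕ × ℕ) : ℕ × ℕ := (c.1, 2 * c.2 + c.1 % 2)

lemma dominoGoal_injective : Function.Injective dominoGoal := by
  rintro ⟨x, j⟩ ⟨x', j'⟩ h
  simp only [dominoGoal, Prod.mk.injEq] at h ⊢
  omega

lemma dominoStart_injective : Function.Injective dominoStart := by
  rintro ⟨x, j⟩ ⟨x', j'⟩ h
  simp only [dominoStart, Prod.mk.injEq] at h ⊢
  omega

lemma mem_gridCells {m : ℕ} {c : ℕ × ℕ} : c ∈ gridCells m ↔ c.1 < m ∧ c.2 < m := by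
  simp [gridCells]

lemma card_gridCells (m : ℕ) : #(gridCells m) = m * m := by
  simp [gridCells]

lemma dominoStart_mem_gridStarts {m : ℕ} {c : ℕ × ℕ} (hc : c ∈ gridCells m) :
    dominoStart c ∈ gridStarts m := by
  rw [mem_gridCells] at hc
  simp only [gridStarts, gridVerts, dominoStart, mem_filter, mem_product, mem_range,
    Nat.even_iff]
  omega

lemma image_dominoGoal_gridCells (m : ℕ) : (gridCells m).image dominoGoal = gridGoals m := by
  ext ⟨x, y⟩
  simp only [gridCells, gridGoals, gridVerts, dominoGoal, mem_image, mem_filter, mem_product,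
    mem_range, Nat.odd_iff, Prod.exists, Prod.mk.injEq]
  constructor
  · rintro ⟨x, j, ⟨hx, hj⟩, rfl, rfl⟩
    omega
  · intro h
    exact ⟨x, y / 2, by omega, rfl, by omega⟩

lemma gridAdj_dominoStart_dominoGoal (c : ℕ × ℕ) : gridAdj (dominoStart c) (dominoGoal c) := by
  simp only [gridAdj, dominoStart, dominoGoal, Nat.dist]
  omega

lemma gridAdj_dominoStart_dominoGoal_of_dist {x x' : ℕ} (j : ℕ) (h : Nat.dist x x' = 1) :
    gridAdj (dominoStart (x', j)) (dominoGoal (x, j)) := by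
  simp only [gridAdj, dominoStart, dominoGoal, Nat.dist] at h ⊢
  omega

lemma gridAdj_dominoStart_succ_dominoGoal {x : ℕ} (hx : x % 2 = 0) (j : ℕ) :
    gridAdj (dominoStart (x, j + 1)) (dominoGoal (x, j)) := by
  simp only [gridAdj, dominoStart, dominoGoal, Nat.dist]
  omega

lemma gridAdj_dominoStart_dominoGoal_succ {x : ℕ} (hx : x % 2 = 1) (j : ℕ) :
    gridAdj (dominoStart (x, j)) (dominoGoal (x, j + 1)) := by
  simp only [gridAdj, dominoStart, dominoGoal, Nat.dist]
  omega

noncomputable def cellBoundary (m : ℕ) (A : Finset (ℕ × ℕ)) : Finset (ℕ × ℕ) :=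
  {c ∈ gridCells m \ A | ∃ c₀ ∈ A, gridAdj (dominoStart c) (dominoGoal c₀)}

lemma card_add_card_cellBoundary_le {m : ℕ} {A : Finset (ℕ × ℕ)} (hA : A ⊆ gridCells m) :
    #A + #(cellBoundary m A) ≤ #(gridN m (A.image dominoGoal)) := by
  have hdisj : Disjoint A (cellBoundary m A) :=
    disjoint_left.mpr fun _ hc hc' => (mem_sdiff.mp (mem_filter.mp hc').1).2 hc
  have hsub : (A ∪ cellBoundary m A).image dominoStart ⊆ gridN m (A.image dominoGoal) := by
    rintro _ hs
    obtain ⟨c, hc, rfl⟩ := mem_image.mp hs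
    rcases mem_union.mp hc with hc | hc
    · exact mem_filter.mpr ⟨dominoStart_mem_gridStarts (hA hc), _, mem_image_of_mem _ hc,
        gridAdj_dominoStart_dominoGoal c⟩
    · obtain ⟨hc, c₀, hc₀, hadj⟩ := mem_filter.mp hc
      exact mem_filter.mpr ⟨dominoStart_mem_gridStarts (mem_sdiff.mp hc).1, _,
        mem_image_of_mem _ hc₀, hadj⟩
  calc #A + #(cellBoundary m A) = #((A ∪ cellBoundary m A).image dominoStart) := by
        rw [card_image_of_injective _ dominoStart_injective, card_union_of_disjoint hdisj]
    _ ≤ _ := card_le_card hsub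

section Boundary

variable {m : ℕ} {A : Finset (ℕ × ℕ)}

lemma mem_cellBoundary {c c₀ : ℕ × ℕ} (hc : c ∈ gridCells m) (hcA : c ∉ A) (hc₀ : c₀ ∈ A)
    (hadj : gridAdj (dominoStart c) (dominoGoal c₀)) : c ∈ cellBoundary m A :=
  mem_filter.mpr ⟨mem_sdiff.mpr ⟨hc, hcA⟩, c₀, hc₀, hadj⟩

lemma exists_mem_cellBoundary_of_row {x x' j : ℕ} (hx : x < m) (hx' : x' < m) (hj : j < m)
    (hin : (x, j) ∈ A) (hout : (x', j) ∉ A) : ∃ c ∈ cellBoundary m A, c.2 = j := by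
  rcases lt_or_gt_of_ne (ne_of_mem_of_not_mem hin hout ∘ congrArg (·, j)) with h | h
  · obtain ⟨t, -, ht, hin, hout⟩ := Nat.exists_transition (p := fun x => (x, j) ∈ A) h hin hout
    exact ⟨(t + 1, j), mem_cellBoundary (mem_gridCells.mpr ⟨by omega, hj⟩) hout hin
      (gridAdj_dominoStart_dominoGoal_of_dist j (by simp [Nat.dist])), rfl⟩
  · obtain ⟨t, -, ht, hout, hin⟩ :=
      Nat.exists_transition (p := fun x => (x, j) ∉ A) h hout (not_not.mpr hin)
    exact ⟨(t, j), mem_cellBoundary (mem_gridCells.mpr ⟨by omega, hj⟩) hout (not_not.mp hin)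
      (gridAdj_dominoStart_dominoGoal_of_dist j (by simp [Nat.dist])), rfl⟩

lemma exists_mem_cellBoundary_of_even_column {x j j' : ℕ} (hx : x < m) (heven : x % 2 = 0)
    (hj' : j' < m) (hjj' : j < j') (hin : (x, j) ∈ A) (hout : (x, j') ∉ A) :
    ∃ c ∈ cellBoundary m A, c.1 = x := by
  obtain ⟨t, -, ht, hin, hout⟩ := Nat.exists_transition (p := fun j => (x, j) ∈ A) hjj' hin hout
  exact ⟨(x, t + 1), mem_cellBoundary (mem_gridCells.mpr ⟨hx, by omega⟩) hout hin
    (gridAdj_dominoStart_succ_dominoGoal heven t), rfl⟩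

lemma exists_mem_cellBoundary_of_odd_column {x j j' : ℕ} (hx : x < m) (hodd : x % 2 = 1)
    (hj : j < m) (hj'j : j' < j) (hin : (x, j) ∈ A) (hout : (x, j') ∉ A) :
    ∃ c ∈ cellBoundary m A, c.1 = x := by
  obtain ⟨t, -, ht, hout, hin⟩ :=
    Nat.exists_transition (p := fun j => (x, j) ∉ A) hj'j hout (not_not.mpr hin)
  exact ⟨(x, t), mem_cellBoundary (mem_gridCells.mpr ⟨hx, by omega⟩) hout (not_not.mp hin)
    (gridAdj_dominoStart_dominoGoal_succ hodd t), rfl⟩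


lemma half_le_card_cellBoundary_of_full_row_of_empty_row {j j' : ℕ} (hj : j < m) (hj' : j' < m)
    (hfull : ∀ x < m, (x, j) ∈ A) (hempty : ∀ x < m, (x, j') ∉ A) :
    m / 2 ≤ #(cellBoundary m A) := by
  have hne : j ≠ j' := by
    rintro rfl
    exact hempty 0 (by omega) (hfull 0 (by omega))
  rcases lt_or_gt_of_ne hne with h | h
  · calc m / 2 = #((range (m / 2)).image (2 * ·)) := by
          rw [card_image_of_injective _ (fun a b hab => by omega), card_range]
      _ ≤ #(cellBoundary m A) := card_le_card_of_surjOn Prod.fst <| by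
          intro x hx
          obtain ⟨k, hk, rfl⟩ := mem_image.mp hx
          have hkm : 2 * k < m := by have := mem_range.mp hk; omega
          exact exists_mem_cellBoundary_of_even_column hkm (by omega) hj' h (hfull _ hkm)
            (hempty _ hkm)
  · calc m / 2 = #((range (m / 2)).image (2 * · + 1)) := by
          rw [card_image_of_injective _ (fun a b hab => by omega), card_range]
      _ ≤ #(cellBoundary m A) := card_le_card_of_surjOn Prod.fst <| by
          intro x hx
          obtain ⟨k, hk, rfl⟩ := mem_image.mp hx
          have hkm : 2 * k + 1 < m := by have := mem_range.mp hk; omega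
          exact exists_mem_cellBoundary_of_odd_column hkm (by omega) hj h (hfull _ hkm)
            (hempty _ hkm)

lemma card_le_card_cellBoundary_of_mixed_rows {R : Finset ℕ}
    (hR : ∀ j ∈ R, j < m ∧ (∃ x < m, (x, j) ∈ A) ∧ ∃ x < m, (x, j) ∉ A) :
    #R ≤ #(cellBoundary m A) :=
  card_le_card_of_surjOn Prod.snd fun j hj => by
    obtain ⟨hj, ⟨x, hx, hin⟩, x', hx', hout⟩ := hR j hj
    exact exists_mem_cellBoundary_of_row hx hx' hj hin hout

end Boundary

lemma half_le_card_image_snd {m : ℕ} {S : Finset (ℕ × ℕ)} (hS : S ⊆ gridCells m)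
    (hbig : m * m ≤ 2 * #S + 1) (hmiss : ∀ j < m, ∃ x < m, (x, j) ∉ S) :
    m / 2 ≤ #(S.image Prod.snd) := by
  have hfiber : #S ≤ (m - 1) * #(S.image Prod.snd) := by
    refine card_le_mul_card_image S (m - 1) fun j hj => ?_
    obtain ⟨c, hc, rfl⟩ := mem_image.mp hj
    obtain ⟨x, hx, hxS⟩ := hmiss c.2 (mem_gridCells.mp (hS hc)).2
    calc #{c' ∈ S | c'.2 = c.2} ≤ #(((range m).erase x) ×ˢ {c.2}) := card_le_card fun c' hc' => by
          obtain ⟨hc'S, hc'j⟩ := mem_filter.mp hc'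
          have hc'm := mem_gridCells.mp (hS hc'S)
          simp only [mem_product, mem_erase, mem_range, mem_singleton, hc'm.1, hc'j, and_true]
          rintro rfl
          exact hxS (hc'j ▸ hc'S)
      _ = m - 1 := by
          rw [card_product, card_erase_of_mem (mem_range.mpr hx), card_range, card_singleton,
            mul_one]
  by_contra! h
  obtain ⟨k, rfl⟩ : ∃ k, m = k + 2 := ⟨m - 2, by omega⟩
  have : 2 * #(S.image Prod.snd) ≤ k + 1 := by omega
  rw [show k + 2 - 1 = k + 1 from rfl] at hfiber
  nlinarith

theorem half_le_card_cellBoundary {m : ℕ} {A : Finset (ℕ × ℕ)} (hA : A ⊆ gridCells m)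
    (hcard : #A = m * m / 2) : m / 2 ≤ #(cellBoundary m A) := by
  by_cases hfull : ∃ j < m, ∀ x < m, (x, j) ∈ A
  · by_cases hempty : ∃ j < m, ∀ x < m, (x, j) ∉ A
    · obtain ⟨j, hj, hfull⟩ := hfull
      obtain ⟨j', hj', hempty⟩ := hempty
      exact half_le_card_cellBoundary_of_full_row_of_empty_row hj hj' hfull hempty
    · push Not at hempty
      have hcompl : #(gridCells m \ A) = m * m - m * m / 2 := by
        rw [card_sdiff_of_subset hA, card_gridCells, hcard]
      refine (half_le_card_image_snd (S := gridCells m \ A) sdiff_subset (by omega) fun j hj => ?_).trans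
        (card_le_card_cellBoundary_of_mixed_rows fun j hj => ?_)
      · obtain ⟨x, hx, hxA⟩ := hempty j hj
        exact ⟨x, hx, fun h => (mem_sdiff.mp h).2 hxA⟩
      · obtain ⟨c, hc, rfl⟩ := mem_image.mp hj
        obtain ⟨hcm, hcA⟩ := mem_sdiff.mp hc
        have hcm := mem_gridCells.mp hcm
        exact ⟨hcm.2, hempty c.2 hcm.2, c.1, hcm.1, hcA⟩
  · push Not at hfull
    refine (half_le_card_image_snd hA (by omega) hfull).trans
      (card_le_card_cellBoundary_of_mixed_rows fun j hj => ?_)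
    obtain ⟨c, hc, rfl⟩ := mem_image.mp hj
    have hcm := mem_gridCells.mp (hA hc)
    exact ⟨hcm.2, ⟨c.1, hcm.1, hc⟩, hfull c.2 hcm.2⟩

lemma half_le_gridURB {m : ℕ} {π : Fin (m * m) → ℕ × ℕ} (hπ : Function.Injective π)
    (himg : univ.image π = gridGoals m) : m / 2 ≤ gridURB m π := by
  set g := (univ.filter fun j : Fin (m * m) => (j : ℕ) < m * m / 2).image π with hg
  obtain ⟨A, hA, hAg⟩ : ∃ A ⊆ gridCells m, A.image dominoGoal = g := by
    rw [← subset_image_iff, image_dominoGoal_gridCells, ← himg]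
    exact image_subset_image (subset_univ _)
  have hcard : #A = m * m / 2 := by
    rw [← card_image_of_injective A dominoGoal_injective, hAg, hg,
      card_image_of_injective _ hπ, Fin.card_filter_val_lt]
    exact min_eq_right (Nat.div_le_self _ _)
  have hbuffers := card_add_card_cellBoundary_le hA
  have hboundary := half_le_card_cellBoundary hA hcard
  rw [hAg] at hbuffers
  calc m / 2 ≤ #(gridN m g) - m * m / 2 := by omega
    _ ≤ gridURB m π := le_sup (f := fun i =>
          #(gridN m ((univ.filter fun j : Fin (m * m) => (j : ℕ) < i).image π)) - i)
          (mem_range.mpr (by omega))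

lemma half_le_gridUMRB (m : ℕ) : m / 2 ≤ gridUMRB m := by
  have hcard : #(gridGoals m) = m * m := by
    rw [← image_dominoGoal_gridCells, card_image_of_injective _ dominoGoal_injective,
      card_gridCells]
  obtain ⟨π, hπ, himg⟩ := exists_injective_image_univ_eq hcard
  exact le_csInf ⟨_, π, hπ, himg, rfl⟩ fun _ ⟨π, hπ, himg, hk⟩ => hk ▸ half_le_gridURB hπ himg

/-- There is a constant `c > 0` such that for every `m ≥ 2`, the unlabeled minimum number
of running buffers of the dependency grid `D(m, 2m)` is at least `c · m`; since `D(m, 2m)`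
has `n = m²` start (resp. goal) vertices, this says `uMRB(D(m,2m)) = Ω(√n)`. -/
theorem gridUMRB_lower_bound :
    ∃ c : ℝ, 0 < c ∧ ∀ m : ℕ, 2 ≤ m → c * m ≤ (gridUMRB m : ℝ) := by
  refine ⟨1 / 4, by norm_num, fun m hm => ?_⟩
  have hm : m ≤ 4 * gridUMRB m :=
    calc m ≤ 4 * (m / 2) := by omega
      _ ≤ 4 * gridUMRB m := Nat.mul_le_mul_left 4 (half_le_gridUMRB m)
  have hm' : (m : ℝ) ≤ 4 * gridUMRB m := by exact_mod_cast hm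
  linarith
end

section
/- There exists a constant c > 0 such that for every integer m ≥ 2 and every set F of goal vertices of the dependency grid D(m,2m) with |F| = ⌊m²/3⌋, the neighborhood of F satisfies |N(F)| ≥ |F| + c·m, where N(F) denotes the set of start vertices adjacent to some goal vertex in F. -/
open scoped Classical

/-!
Cut `D(m, 2m)` into the `m` bands of rows `2k, 2k + 1`. Each column of a band carries exactly one
goal and one start vertex, and these two are adjacent; so if `S k` and `T k` are the columns of
band `k` occupied by `F` and by `N(F)`, then `S k ⊆ T k` and `|N(F)| - |F| = ∑ₖ |T k \ S k|`.
A band that is neither empty nor full gains a column through a horizontal neighbour. If some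
band is full and another empty, every column of one parity leaves `F` somewhere between them,
and the vertical neighbour where it leaves is a new start vertex: `⌊m/2⌋` gains. Otherwise the
density `|F| = ⌊m²/3⌋` forces at least `m/4` bands to be neither empty nor full. So `c = 1/4`.
-/

open Finset

theorem Nat.card_filter_odd_range (m : ℕ) : #{x ∈ range m | Odd x} = m / 2 := by
  simpa [← even_iff_two_dvd, Nat.even_add_one] using Nat.card_multiples m 2

theorem Nat.card_filter_even_range (m : ℕ) : #{x ∈ range m | Even x} = m - m / 2 := by
  have : {x ∈ range m | Even x} = range m \ {x ∈ range m | Odd x} := by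
    ext; simp only [mem_filter, mem_sdiff, ← Nat.not_odd_iff_even]; tauto
  rw [this, card_sdiff_of_subset (filter_subset _ _), card_range, Nat.card_filter_odd_range]

theorem Nat.exists_between_and_not_succ {P : ℕ → Prop} {i j : ℕ} (hij : i ≤ j) (hi : P i)
    (hj : ¬P j) : ∃ k, i ≤ k ∧ k < j ∧ P k ∧ ¬P (k + 1) := by
  by_contra! h
  have : ∀ n, i + n ≤ j → P (i + n) := by
    intro n
    induction n with
    | zero => exact fun _ => hi
    | succ n ih => exact fun hn => h (i + n) (by omega) (by omega) (ih (by omega))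
  exact hj (by simpa [Nat.add_sub_cancel' hij] using this (j - i) (by omega))

/-- `S k` and `T k` stand for the columns occupied by `F` and `N(F)` in band `k`. The goal vertex
of an even column lies in the upper row of its band and that of an odd column in the lower row,
which fixes the direction of the vertical neighbours. -/
structure IsBandNbhd (m : ℕ) (S T : ℕ → Finset ℕ) : Prop where
  subset_range : ∀ k < m, S k ⊆ range m
  subset : ∀ k < m, S k ⊆ T k
  succ_mem : ∀ k < m, ∀ x ∈ S k, x + 1 < m → x + 1 ∈ T k
  pred_mem : ∀ k < m, ∀ x ∈ S k, 0 < x → x - 1 ∈ T k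
  mem_succ_of_even : ∀ k, k + 1 < m → ∀ x ∈ S k, Even x → x ∈ T (k + 1)
  mem_of_odd_mem_succ : ∀ k, k + 1 < m → ∀ x ∈ S (k + 1), Odd x → x ∈ T k

def properBands (m : ℕ) (S : ℕ → Finset ℕ) : Finset ℕ :=
  {k ∈ range m | (S k).Nonempty ∧ S k ≠ range m}

theorem mem_properBands {m k : ℕ} {S : ℕ → Finset ℕ} :
    k ∈ properBands m S ↔ k < m ∧ (S k).Nonempty ∧ S k ≠ range m := by
  rw [properBands, mem_filter, mem_range]

theorem properBands_subset (m : ℕ) (S : ℕ → Finset ℕ) : properBands m S ⊆ range m :=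
  filter_subset _ _

theorem Finset.eq_range_of_forall_succ_pred_mem {m : ℕ} {s : Finset ℕ} (hs : s ⊆ range m)
    (hne : s.Nonempty) (hsucc : ∀ x ∈ s, x + 1 < m → x + 1 ∈ s)
    (hpred : ∀ x ∈ s, 0 < x → x - 1 ∈ s) : s = range m := by
  have hzero : 0 ∈ s := by
    by_contra h0
    have hmin := s.min'_mem hne
    have hpos : 0 < s.min' hne := Nat.pos_of_ne_zero fun h => h0 (h ▸ hmin)
    exact absurd (s.min'_le _ (hpred _ hmin hpos)) (by omega)
  refine hs.antisymm fun y hy => ?_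
  induction y with
  | zero => exact hzero
  | succ y ih =>
    rw [mem_range] at hy
    exact hsucc y (ih (mem_range.2 (by omega))) hy

namespace IsBandNbhd

variable {m : ℕ} {S T : ℕ → Finset ℕ}

theorem card_add_one_le (h : IsBandNbhd m S T) {k : ℕ} (hk : k < m) (hne : (S k).Nonempty)
    (hfull : S k ≠ range m) : #(S k) + 1 ≤ #(T k) := by
  suffices S k ⊂ T k from card_lt_card this
  refine (h.subset k hk).ssubset_of_ne fun hST => hfull ?_
  exact eq_range_of_forall_succ_pred_mem (h.subset_range k hk) hne
    (fun x hx => hST ▸ h.succ_mem k hk x hx) (fun x hx => hST ▸ h.pred_mem k hk x hx)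

theorem sum_card_eq_add (h : IsBandNbhd m S T) :
    ∑ k ∈ range m, #(T k) = ∑ k ∈ range m, #(S k) + ∑ k ∈ range m, #(T k \ S k) := by
  rw [← sum_add_distrib]
  refine sum_congr rfl fun k hk => ?_
  rw [← card_sdiff_add_card_eq_card (h.subset k (mem_range.1 hk)), add_comm]

theorem card_properBands_le (h : IsBandNbhd m S T) :
    #(properBands m S) ≤ ∑ k ∈ range m, #(T k \ S k) := by
  calc #(properBands m S) = ∑ k ∈ properBands m S, 1 := card_eq_sum_ones _
    _ ≤ ∑ k ∈ properBands m S, #(T k \ S k) := by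
      refine sum_le_sum fun k hk => ?_
      obtain ⟨hk, hne, hfull⟩ := mem_properBands.1 hk
      have := h.card_add_one_le hk hne hfull
      rw [card_sdiff_of_subset (h.subset k hk)]
      omega
    _ ≤ ∑ k ∈ range m, #(T k \ S k) := sum_le_sum_of_subset (properBands_subset m S)

/-- A column that is in `S i` but not in `S j` leaves `S` between the two bands, and there it
has a vertical neighbour in `T` outside `S`: even columns when `i < j`, odd ones when `j < i`. -/
theorem card_filter_even_le (h : IsBandNbhd m S T) {i j : ℕ} (hij : i < j) (hj : j < m)
    (hi : S i = range m) (hj' : S j = ∅) :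
    #{x ∈ range m | Even x} ≤ ∑ k ∈ range m, #(T k \ S k) := by
  rw [← card_sigma]
  refine le_trans (card_le_card fun x hx => ?_) (card_image_le (f := Sigma.snd))
  obtain ⟨hxm, hx⟩ := mem_filter.1 hx
  obtain ⟨k, -, hkj, hk, hk'⟩ := Nat.exists_between_and_not_succ (P := (x ∈ S ·)) hij.le
    (hi ▸ hxm) (by simp [hj'])
  exact mem_image.2 ⟨⟨k + 1, x⟩, mem_sigma.2 ⟨mem_range.2 (show k + 1 < m by omega),
    mem_sdiff.2 ⟨h.mem_succ_of_even k (by omega) x hk hx, hk'⟩⟩, rfl⟩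

theorem card_filter_odd_le (h : IsBandNbhd m S T) {i j : ℕ} (hji : j < i) (hi : i < m)
    (hi' : S i = range m) (hj : S j = ∅) :
    #{x ∈ range m | Odd x} ≤ ∑ k ∈ range m, #(T k \ S k) := by
  rw [← card_sigma]
  refine le_trans (card_le_card fun x hx => ?_) (card_image_le (f := Sigma.snd))
  obtain ⟨hxm, hx⟩ := mem_filter.1 hx
  obtain ⟨k, -, hki, hk, hk'⟩ := Nat.exists_between_and_not_succ (P := (x ∉ S ·)) hji.le
    (by simp [hj]) (by simpa [hi'] using hxm)
  exact mem_image.2 ⟨⟨k, x⟩, mem_sigma.2 ⟨mem_range.2 (show k < m by omega),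
    mem_sdiff.2 ⟨h.mem_of_odd_mem_succ k (by omega) x (not_not.1 hk') hx, hk⟩⟩, rfl⟩

end IsBandNbhd

theorem sum_card_le_mul_card_properBands {m : ℕ} {S : ℕ → Finset ℕ} (hS : ∀ k < m, S k ⊆ range m)
    (hfull : ∀ k < m, S k ≠ range m) :
    ∑ k ∈ range m, #(S k) ≤ (m - 1) * #(properBands m S) := by
  calc ∑ k ∈ range m, #(S k) = ∑ k ∈ properBands m S, #(S k) := by
        refine (sum_subset (properBands_subset m S) fun k hk hk' => ?_).symm
        have hk := mem_range.1 hk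
        have : ¬(S k).Nonempty := fun hne => hk' (mem_properBands.2 ⟨hk, hne, hfull k hk⟩)
        simpa [not_nonempty_iff_eq_empty] using this
    _ ≤ ∑ k ∈ properBands m S, (m - 1) := sum_le_sum fun k hk => by
        have hk := (mem_properBands.1 hk).1
        have := card_lt_card ((hS k hk).ssubset_of_ne (hfull k hk))
        rw [card_range] at this
        omega
    _ = (m - 1) * #(properBands m S) := by rw [sum_const, smul_eq_mul, mul_comm]

theorem mul_self_le_sum_card_add_mul_card_properBands {m : ℕ} {S : ℕ → Finset ℕ}
    (hne : ∀ k < m, (S k).Nonempty) :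
    m * m ≤ ∑ k ∈ range m, #(S k) + (m - 1) * #(properBands m S) := by
  calc m * m = ∑ k ∈ range m, m := by rw [sum_const, card_range, smul_eq_mul]
    _ ≤ ∑ k ∈ range m, (#(S k) + if k ∈ properBands m S then m - 1 else 0) :=
      sum_le_sum fun k hk => by
        have hk := mem_range.1 hk
        have hpos := (hne k hk).card_pos
        by_cases hfull : S k = range m
        · simp [hfull]
        · rw [if_pos (mem_properBands.2 ⟨hk, hne k hk, hfull⟩)]
          omega
    _ = ∑ k ∈ range m, #(S k) + (m - 1) * #(properBands m S) := by
      rw [sum_add_distrib, ← sum_filter, filter_mem_eq_inter,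
        inter_eq_right.2 (properBands_subset m S), sum_const, smul_eq_mul, mul_comm]

theorem IsBandNbhd.le_four_mul_sum_card_sdiff {m : ℕ} {S T : ℕ → Finset ℕ}
    (h : IsBandNbhd m S T) (hm : 2 ≤ m) (hq : ∑ k ∈ range m, #(S k) = m * m / 3) :
    m ≤ 4 * ∑ k ∈ range m, #(T k \ S k) := by
  have hdiv_le := Nat.div_mul_le_self (m * m) 3
  have hlt_div := Nat.lt_div_mul_add (a := m * m) (show 0 < 3 by norm_num)
  obtain ⟨n, rfl⟩ : ∃ n, m = n + 1 := ⟨m - 1, by omega⟩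
  have hN := h.card_properBands_le
  by_cases hfull : ∃ i < n + 1, S i = range (n + 1)
  · obtain ⟨i, hi, hSi⟩ := hfull
    by_cases hempty : ∃ j < n + 1, S j = ∅
    · obtain ⟨j, hj, hSj⟩ := hempty
      rcases lt_trichotomy i j with hij | rfl | hji
      · have := h.card_filter_even_le hij hj hSi hSj
        rw [Nat.card_filter_even_range] at this
        omega
      · exact absurd (hSj ▸ hSi).symm nonempty_range_add_one.ne_empty
      · have := h.card_filter_odd_le hji hi hSi hSj
        rw [Nat.card_filter_odd_range] at this
        omega
    · push Not at hempty
      have := mul_self_le_sum_card_add_mul_card_properBands hempty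
      rw [Nat.add_sub_cancel] at this
      nlinarith
  · push Not at hfull
    have := sum_card_le_mul_card_properBands h.subset_range hfull
    rw [Nat.add_sub_cancel] at this
    nlinarith

def band (A : Finset (ℕ × ℕ)) (k : ℕ) : Finset ℕ :=
  {v ∈ A | v.2 / 2 = k}.image Prod.fst

theorem card_eq_sum_card_band {m p : ℕ} {A : Finset (ℕ × ℕ)}
    (hA : ∀ v ∈ A, v.2 < 2 * m ∧ (v.1 + v.2) % 2 = p) :
    #A = ∑ k ∈ range m, #(band A k) := by
  rw [card_eq_sum_card_fiberwise (f := fun v => v.2 / 2) (t := range m)]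
  · refine sum_congr rfl fun k _ => (card_image_of_injOn fun v hv w hw hvw => ?_).symm
    simp only [coe_filter, Set.mem_ofPred_eq] at hv hw
    have := hA v hv.1
    have := hA w hw.1
    exact Prod.ext hvw (by omega)
  · intro v hv
    have := (hA v hv).1
    exact mem_range.2 (show v.2 / 2 < m by omega)

theorem gridAdj_iff {a b c d : ℕ} :
    gridAdj (a, b) (c, d) ↔ a - c + (c - a) + (b - d + (d - b)) = 1 :=
  Iff.rfl

theorem mem_gridGoals {m : ℕ} {v : ℕ × ℕ} :
    v ∈ gridGoals m ↔ v.1 < m ∧ v.2 < 2 * m ∧ (v.1 + v.2) % 2 = 1 := by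
  simp [gridGoals, gridVerts, Nat.odd_iff, and_assoc]

theorem mem_gridStarts {m : ℕ} {v : ℕ × ℕ} :
    v ∈ gridStarts m ↔ v.1 < m ∧ v.2 < 2 * m ∧ (v.1 + v.2) % 2 = 0 := by
  simp [gridStarts, gridVerts, Nat.even_iff, and_assoc]

section

variable {m : ℕ} {F : Finset (ℕ × ℕ)}

theorem exists_of_mem_band (hF : F ⊆ gridGoals m) {k x : ℕ} (hx : x ∈ band F k) :
    ∃ y, (x, y) ∈ F ∧ y / 2 = k ∧ x < m ∧ y < 2 * m ∧ (x + y) % 2 = 1 := by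
  obtain ⟨⟨x, y⟩, hv, rfl⟩ := mem_image.1 hx
  obtain ⟨hvF, rfl⟩ := mem_filter.1 hv
  exact ⟨y, hvF, rfl, mem_gridGoals.1 (hF hvF)⟩

theorem mem_band_gridN (hF : F ⊆ gridGoals m) {x y x' y' k : ℕ} (hxy : (x, y) ∈ F)
    (hx' : x' < m) (hy' : y' < 2 * m) (hadj : gridAdj (x', y') (x, y)) (hk : y' / 2 = k) :
    x' ∈ band (gridN m F) k := by
  have hgoal := mem_gridGoals.1 (hF hxy)
  have hstart : (x', y') ∈ gridStarts m := by
    rw [gridAdj_iff] at hadj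
    exact mem_gridStarts.2 ⟨hx', hy', by dsimp at hgoal ⊢; omega⟩
  exact mem_image.2 ⟨(x', y'), mem_filter.2 ⟨mem_filter.2 ⟨hstart, _, hxy, hadj⟩, hk⟩, rfl⟩

theorem isBandNbhd_band_gridN (hF : F ⊆ gridGoals m) :
    IsBandNbhd m (band F) (band (gridN m F)) where
  subset_range k _ x hx := by
    obtain ⟨y, -, -, hx, -⟩ := exists_of_mem_band hF hx
    exact mem_range.2 hx
  subset k _ x hx := by
    obtain ⟨y, hy, rfl, hx, hym, -⟩ := exists_of_mem_band hF hx
    -- the other row of the band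
    exact mem_band_gridN hF hy (y' := 2 * (y / 2) + 1 - y % 2) hx (by omega)
      (gridAdj_iff.2 (by omega)) (by omega)
  succ_mem k _ x hx hx' := by
    obtain ⟨y, hy, rfl, -, hym, -⟩ := exists_of_mem_band hF hx
    exact mem_band_gridN hF hy hx' hym (gridAdj_iff.2 (by omega)) rfl
  pred_mem k _ x hx hx0 := by
    obtain ⟨y, hy, rfl, hxm, hym, -⟩ := exists_of_mem_band hF hx
    exact mem_band_gridN hF hy (by omega) hym (gridAdj_iff.2 (by omega)) rfl
  mem_succ_of_even k hk x hx heven := by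
    obtain ⟨y, hy, rfl, hxm, -, hpar⟩ := exists_of_mem_band hF hx
    rw [Nat.even_iff] at heven
    exact mem_band_gridN hF hy hxm (y' := y + 1) (by omega) (gridAdj_iff.2 (by omega)) (by omega)
  mem_of_odd_mem_succ k _ x hx hodd := by
    obtain ⟨y, hy, hyk, hxm, -, hpar⟩ := exists_of_mem_band hF hx
    rw [Nat.odd_iff] at hodd
    exact mem_band_gridN hF hy hxm (y' := y - 1) (by omega) (gridAdj_iff.2 (by omega)) (by omega)

theorem four_mul_card_add_le_four_mul_card_gridN (hm : 2 ≤ m) (hF : F ⊆ gridGoals m)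
    (hcard : #F = m * m / 3) : 4 * #F + m ≤ 4 * #(gridN m F) := by
  have hS : #F = ∑ k ∈ range m, #(band F k) :=
    card_eq_sum_card_band fun v hv => (mem_gridGoals.1 (hF hv)).2
  have hT : #(gridN m F) = ∑ k ∈ range m, #(band (gridN m F) k) :=
    card_eq_sum_card_band fun v hv => (mem_gridStarts.1 (mem_filter.1 hv).1).2
  have h := isBandNbhd_band_gridN hF
  have := h.le_four_mul_sum_card_sdiff hm (hS ▸ hcard)
  rw [hT, h.sum_card_eq_add, ← hS]
  omega

end

/-- There is a constant `c > 0` such that for every `m ≥ 2` and every set `F` of goal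
vertices of `D(m, 2m)` with `|F| = ⌊m²/3⌋`, the neighborhood of `F` among start vertices
satisfies `|N(F)| ≥ |F| + c · m`. -/
theorem gridN_card_lower_bound :
    ∃ c : ℝ, 0 < c ∧ ∀ m : ℕ, 2 ≤ m → ∀ F : Finset (ℕ × ℕ), F ⊆ gridGoals m →
      F.card = m * m / 3 → (F.card : ℝ) + c * m ≤ ((gridN m F).card : ℝ) := by
  refine ⟨1 / 4, by norm_num, fun m hm F hF hcard => ?_⟩
  have : (4 * F.card + m : ℝ) ≤ 4 * (gridN m F).card := by
    exact_mod_cast four_mul_card_add_le_four_mul_card_gridN hm hF hcard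
  linarith
end

section
/- Let m ≥ 1 and consider the dependency grid D(m,2m). Fix a set F of goal vertices. Call a start vertex u cleared (with respect to F) if u is adjacent to some goal vertex in F and the partner goal of u is not in F. For 1 ≤ i ≤ m, let f_i be the number of goal vertices of F whose first coordinate is i, and let c_i be the number of cleared start vertices whose first coordinate is i. Then for every 1 ≤ i < m, if 0 < f_i + f_{i+1} < 2m, then c_i + c_{i+1} ≥ 1. -/
open scoped Classical

/-- The partner of a vertex in its vertex pair `p_{i,j} = {(i, 2j), (i, 2j+1)}`
(`0`-based coordinates): the other vertex of the pair. -/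
def gridPartner (v : ℕ × ℕ) : ℕ × ℕ := (v.1, if Even v.2 then v.2 + 1 else v.2 - 1)

/-- With respect to a set `F` of goal vertices, the cleared start vertices: start vertices
adjacent to some goal vertex in `F` whose partner goal is not in `F`. -/
noncomputable def gridCleared (m : ℕ) (F : Finset (ℕ × ℕ)) : Finset (ℕ × ℕ) :=
  (gridStarts m).filter (fun u => (∃ t ∈ F, gridAdj u t) ∧ gridPartner u ∉ F)

/-- The goal of the `k`-th pair on the Hamiltonian cycle through columns `a` (even) and `b`. -/
def cycG (a b m k : ℕ) : ℕ × ℕ := if k < m then (a, 2*k+1) else (b, 2*(m-1-(k-m)))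

/-- The start of the `k`-th pair on the Hamiltonian cycle. -/
def cycS (a b m k : ℕ) : ℕ × ℕ := if k < m then (a, 2*k) else (b, 2*(m-1-(k-m))+1)

lemma cyc_partner (a b m k : ℕ) : gridPartner (cycS a b m k) = cycG a b m k := by
  unfold gridPartner cycS cycG
  by_cases h : k < m
  · simp only [if_pos h]
    have : Even ((a, 2*k).2) := by simp [Nat.even_mul]
    simp [this]
  · simp only [if_neg h]
    have : ¬ Even ((b, 2*(m-1-(k-m))+1).2) := by
      simp [Nat.even_add_one, Nat.even_mul]
    simp [this]

lemma cyc_adj (a b m k : ℕ) (hm : 1 ≤ m) (hk : k < 2*m)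
    (hab : Nat.dist a b = 1) :
    gridAdj (cycS a b m ((k+1) % (2*m))) (cycG a b m k) := by
  unfold gridAdj cycS cycG
  rcases Nat.lt_or_ge (k+1) (2*m) with h | h
  · rw [Nat.mod_eq_of_lt h]
    split_ifs with h1 h2 h2 <;> simp [Nat.dist] at * <;> omega
  · have : (k+1) % (2*m) = 0 := by
      have : k + 1 = 2*m := by omega
      simp [this]
    rw [this]
    split_ifs with h1 h2 h2 <;> simp [Nat.dist] at * <;> omega

lemma cyc_start_mem (a b m k : ℕ) (ha : Even a) (hb : ¬ Even b)
    (ham : a < m) (hbm : b < m) (hk : k < 2*m) : cycS a b m k ∈ gridStarts m := by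
  unfold gridStarts gridVerts cycS
  rw [Nat.even_iff] at ha
  rw [Nat.even_iff] at hb
  by_cases h : k < m <;>
    simp only [if_pos, if_neg, h, Finset.mem_filter, Finset.mem_product,
      Finset.mem_range, if_true, if_false] <;>
    refine ⟨⟨by omega, by omega⟩, ?_⟩ <;> simp only [Nat.even_iff] <;> omega

lemma cyc_col (a b m k : ℕ) : (cycS a b m k).1 = a ∨ (cycS a b m k).1 = b := by
  unfold cycS; split_ifs <;> simp

lemma cycle_reach (n : ℕ) (hn : 0 < n) (P : ℕ → Prop)
    (h : ∀ k < n, P k → P ((k+1) % n)) (k₀ : ℕ) (hk₀ : k₀ < n) (h₀ : P k₀) :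
    ∀ k < n, P k := by
  have key : ∀ j, P ((k₀ + j) % n) := by
    intro j
    induction j with
    | zero => simpa [Nat.mod_eq_of_lt hk₀] using h₀
    | succ j ih =>
      have hlt : (k₀ + j) % n < n := Nat.mod_lt _ hn
      have h2 := h _ hlt ih
      have heq : ((k₀ + j) % n + 1) % n = (k₀ + (j+1)) % n := by
        conv_rhs => rw [show k₀ + (j+1) = (k₀+j) + 1 by ring, Nat.add_mod]
        rcases Nat.eq_or_lt_of_le hn with h1 | h1
        · simp [← h1]
        · rw [Nat.mod_eq_of_lt h1]
      rwa [heq] at h2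
  intro k hk
  have hkey := key (n - k₀ + k)
  rwa [show (k₀ + (n - k₀ + k)) = n + k by omega, Nat.add_mod_left,
    Nat.mod_eq_of_lt hk] at hkey

lemma main_aux (m a b : ℕ) (hm : 1 ≤ m) (F : Finset (ℕ × ℕ)) (hF : F ⊆ gridGoals m)
    (ha : Even a) (hb : ¬ Even b) (ham : a < m) (hbm : b < m) (hab : Nat.dist a b = 1)
    (hpos : ∃ v ∈ F, v.1 = a ∨ v.1 = b)
    (hlt : (F.filter (fun v => v.1 = a)).card + (F.filter (fun v => v.1 = b)).card < 2*m) :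
    ∃ u ∈ gridCleared m F, u.1 = a ∨ u.1 = b := by
  have hab' : a ≠ b := fun h => hb (h ▸ ha)
  have hm2 : 0 < 2*m := by omega
  -- Step A: some goal on the cycle is in F
  have stepA : ∃ k < 2*m, cycG a b m k ∈ F := by
    obtain ⟨v, hv, hcol⟩ := hpos
    obtain ⟨x, y⟩ := v
    have hg := hF hv
    unfold gridGoals gridVerts at hg
    simp only [Finset.mem_filter, Finset.mem_product, Finset.mem_range] at hg
    obtain ⟨⟨hx, hy⟩, hodd⟩ := hg
    rw [Nat.odd_iff] at hodd
    rw [Nat.even_iff] at ha; rw [Nat.even_iff] at hb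
    simp only at hcol hodd hx hy
    rcases hcol with hc | hc
    · -- column a : y is odd
      refine ⟨y / 2, by omega, ?_⟩
      have : cycG a b m (y/2) = (x, y) := by
        unfold cycG
        rw [if_pos (by omega)]
        have : 2 * (y/2) + 1 = y := by omega
        rw [this, hc]
      rwa [this]
    · -- column b : y is even
      refine ⟨m + (m - 1 - y/2), by omega, ?_⟩
      have : cycG a b m (m + (m - 1 - y/2)) = (x, y) := by
        unfold cycG
        rw [if_neg (by omega)]
        have : 2 * (m - 1 - (m + (m - 1 - y/2) - m)) = y := by omega
        rw [this, hc]
      rwa [this]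
  -- Step B: some goal on the cycle is not in F
  have stepB : ∃ k < 2*m, cycG a b m k ∉ F := by
    by_contra hcon
    push_neg at hcon
    have hinj : Set.InjOn (cycG a b m) (Finset.range (2*m)) := by
      intro k hk k' hk' he
      simp only [Finset.coe_range, Set.mem_Iio] at hk hk'
      unfold cycG at he
      split_ifs at he with h1 h2 h2 <;>
        simp only [Prod.mk.injEq] at he <;> omega
    have hcard : ((Finset.range (2*m)).image (cycG a b m)).card = 2*m := by
      rw [Finset.card_image_of_injOn hinj, Finset.card_range]
    have hsub : (Finset.range (2*m)).image (cycG a b m) ⊆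
        (F.filter (fun v => v.1 = a)) ∪ (F.filter (fun v => v.1 = b)) := by
      intro v hv
      simp only [Finset.mem_image, Finset.mem_range] at hv
      obtain ⟨k, hk, rfl⟩ := hv
      have hmem := hcon k hk
      have hcol : (cycG a b m k).1 = a ∨ (cycG a b m k).1 = b := by
        unfold cycG; split_ifs <;> simp
      simp only [Finset.mem_union, Finset.mem_filter]
      tauto
    have := Finset.card_le_card hsub
    have := Finset.card_union_le (F.filter (fun v => v.1 = a)) (F.filter (fun v => v.1 = b))
    omega
  -- Step C: a transition edge exists
  have stepC : ∃ k < 2*m, cycG a b m k ∈ F ∧ cycG a b m ((k+1) % (2*m)) ∉ F := by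
    by_contra hcon
    push_neg at hcon
    obtain ⟨k₀, hk₀, hk₀F⟩ := stepA
    obtain ⟨k₁, hk₁, hk₁F⟩ := stepB
    exact hk₁F (cycle_reach (2*m) hm2 (fun k => cycG a b m k ∈ F) hcon k₀ hk₀ hk₀F k₁ hk₁)
  -- Step D: conclude
  obtain ⟨k, hk, hkF, hk'F⟩ := stepC
  set k' := (k+1) % (2*m) with hk'def
  have hk' : k' < 2*m := Nat.mod_lt _ hm2
  refine ⟨cycS a b m k', ?_, cyc_col a b m k'⟩
  unfold gridCleared
  rw [Finset.mem_filter]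
  exact ⟨cyc_start_mem a b m k' ha hb ham hbm hk',
    ⟨cycG a b m k, hkF, cyc_adj a b m k hm hk hab⟩,
    by rw [cyc_partner]; exact hk'F⟩

/-- In the dependency grid `D(m, 2m)`, for a set `F` of goal vertices, let `f i` be the
number of goal vertices of `F` in column `i` and `c i` the number of cleared start
vertices in column `i`. For any two adjacent columns `i` and `i+1`, if
`0 < f i + f (i+1) < 2m` then `c i + c (i+1) ≥ 1`. -/
theorem gridCleared_adjacent_columns (m : ℕ) (hm : 1 ≤ m) (F : Finset (ℕ × ℕ))
    (hF : F ⊆ gridGoals m) (i : ℕ) (hi : i + 1 < m)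
    (hpos : 0 < (F.filter (fun v => v.1 = i)).card + (F.filter (fun v => v.1 = i + 1)).card)
    (hlt : (F.filter (fun v => v.1 = i)).card + (F.filter (fun v => v.1 = i + 1)).card
      < 2 * m) :
    1 ≤ ((gridCleared m F).filter (fun v => v.1 = i)).card +
      ((gridCleared m F).filter (fun v => v.1 = i + 1)).card := by
  have hpos' : ∃ v ∈ F, v.1 = i ∨ v.1 = i + 1 := by
    have h1 : 0 < (F.filter (fun v => v.1 = i)).card ∨
        0 < (F.filter (fun v => v.1 = i + 1)).card := by omega
    rcases h1 with h1 | h1 <;>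
      obtain ⟨v, hv⟩ := Finset.card_pos.mp h1 <;>
      rw [Finset.mem_filter] at hv <;> exact ⟨v, hv.1, by tauto⟩
  have key : ∃ u ∈ gridCleared m F, u.1 = i ∨ u.1 = i + 1 := by
    by_cases hpar : Even i
    · exact main_aux m i (i+1) hm F hF hpar (by simp [Nat.even_add_one, hpar])
        (by omega) hi (by simp [Nat.dist]) hpos' hlt
    · have := main_aux m (i+1) i hm F hF (by simp [Nat.even_add_one, hpar])
        hpar hi (by omega) (by simp [Nat.dist])
        (by obtain ⟨v, hv, hc⟩ := hpos'; exact ⟨v, hv, hc.symm⟩) (by omega)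
      obtain ⟨u, hu, hcol⟩ := this
      exact ⟨u, hu, by tauto⟩
  obtain ⟨u, hu, hcol⟩ := key
  have : ∀ j, u.1 = j → 0 < ((gridCleared m F).filter (fun v => v.1 = j)).card := by
    intro j hj
    exact Finset.card_pos.mpr ⟨u, Finset.mem_filter.mpr ⟨hu, hj⟩⟩
  rcases hcol with hc | hc
  · have := this i hc; omega
  · have := this (i+1) hc; omega
end

section
/- Let r > 0 and let A, B, C, D ∈ ℝ² satisfy dist(A,B) ≥ 2r, dist(C,D) ≥ 2r, dist(A,D) < 2r, and dist(B,C) < 2r. Then the closed segments [A,D] and [B,C] are disjoint. -/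
/-- If `dist A B ≥ 2r`, `dist C D ≥ 2r`, `dist A D < 2r` and `dist B C < 2r` in the
Euclidean plane (with `r > 0`), then the closed segments `[A,D]` and `[B,C]` are
disjoint. -/
theorem segments_disjoint_of_dist (r : ℝ) (hr : 0 < r) (A B C D : EuclideanSpace ℝ (Fin 2))
    (hAB : 2 * r ≤ dist A B) (hCD : 2 * r ≤ dist C D)
    (hAD : dist A D < 2 * r) (hBC : dist B C < 2 * r) :
    Disjoint (segment ℝ A D) (segment ℝ B C) := by
  rw [Set.disjoint_left]
  intro P hP hP'
  have h1 : dist A P + dist P D = dist A D := dist_add_dist_of_mem_segment hP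
  have h2 : dist B P + dist P C = dist B C := dist_add_dist_of_mem_segment hP'
  have h3 : dist A B ≤ dist A P + dist P B := dist_triangle A P B
  have h4 : dist C D ≤ dist C P + dist P D := dist_triangle C P D
  have := dist_comm B P
  have := dist_comm C P
  linarith
end

section
/- Let r > 0, let c ∈ ℝ², and let X be a finite set of points in ℝ² such that dist(c,x) < 2r for every x ∈ X and dist(x,x') ≥ 2r for all distinct x, x' ∈ X. Then |X| ≤ 5. -/
/-!
Seen from `c`, two points `x ≠ y` of `X` subtend an angle greater than `π / 3`: with
`a = ‖x - c‖`, `b = ‖y - c‖`, both `< 2r ≤ ‖x - y‖`, the law of cosines gives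
`2ab cos θ ≤ a² + b² - 4r² < min(a, b)² ≤ ab`. Identify the plane with `ℂ` and rotate so that
one point of `X` lies on the positive real axis. The arguments of the other points then lie in
`(-π, -π/3) ∪ (π/3, π]`, which is covered by the four arcs `((k - 1)π/3, kπ/3]`,
`k ∈ {-2, -1, 2, 3}`; two of five such points would share an arc and so subtend an angle
`< π / 3`.
-/

open InnerProductGeometry Real
open scoped RealInnerProductSpace

section InnerProductSpace

variable {E : Type*} [NormedAddCommGroup E] [InnerProductSpace ℝ E]

theorem two_inner_lt_norm_mul_norm_of_norm_lt_of_le_norm_sub {u v : E} {d : ℝ}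
    (hu : ‖u‖ < d) (hv : ‖v‖ < d) (huv : d ≤ ‖u - v‖) : 2 * ⟪u, v⟫ < ‖u‖ * ‖v‖ := by
  have hd : d ^ 2 ≤ ‖u - v‖ ^ 2 := pow_le_pow_left₀ ((norm_nonneg u).trans hu.le) huv 2
  rw [norm_sub_sq_real] at hd
  rcases le_total ‖u‖ ‖v‖ with h | h <;> nlinarith [norm_nonneg u, norm_nonneg v]

theorem pi_div_three_lt_angle_of_norm_lt_of_le_norm_sub {u v : E} {d : ℝ}
    (hu : ‖u‖ < d) (hv : ‖v‖ < d) (huv : d ≤ ‖u - v‖) : π / 3 < angle u v := by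
  have hu0 : u ≠ 0 := by rintro rfl; rw [zero_sub, norm_neg] at huv; linarith
  have hv0 : v ≠ 0 := by rintro rfl; rw [sub_zero] at huv; linarith
  have hcos : Real.cos (angle u v) < Real.cos (π / 3) := by
    rw [cos_angle, cos_pi_div_three, div_lt_iff₀ (by positivity)]
    linarith [two_inner_lt_norm_mul_norm_of_norm_lt_of_le_norm_sub hu hv huv]
  by_contra! h
  exact hcos.not_ge (cos_le_cos_of_nonneg_of_le_pi (angle_nonneg u v) (by linarith [pi_pos]) h)

end InnerProductSpace

theorem abs_sub_lt_of_ceil_div_eq_ceil_div {K : Type*} [Field K] [LinearOrder K]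
    [IsStrictOrderedRing K] [FloorRing K] {a b c : K} (hc : 0 < c) (h : ⌈a / c⌉ = ⌈b / c⌉) :
    |a - b| < c := by
  have h' : (⌈a / c⌉ : K) = ⌈b / c⌉ := congrArg _ h
  have : |a / c - b / c| < 1 := by
    rw [abs_sub_lt_iff]
    constructor <;> linarith [Int.le_ceil (a / c), Int.ceil_lt_add_one (a / c),
      Int.le_ceil (b / c), Int.ceil_lt_add_one (b / c)]
  rwa [← sub_div, abs_div, abs_of_pos hc, div_lt_one hc] at this

namespace Complex

theorem arg_div_eq_sub_arg_iff {x y : ℂ} (hx : x ≠ 0) (hy : y ≠ 0) :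
    (x / y).arg = x.arg - y.arg ↔ x.arg - y.arg ∈ Set.Ioc (-π) π := by
  rw [← arg_coe_angle_toReal_eq_arg, arg_div_coe_angle hx hy, ← Real.Angle.coe_sub,
    Real.Angle.toReal_coe_eq_self_iff_mem_Ioc]

theorem angle_eq_abs_arg_sub {x y : ℂ} (hx : x ≠ 0) (hy : y ≠ 0)
    (h : x.arg - y.arg ∈ Set.Ioc (-π) π) : angle x y = |x.arg - y.arg| := by
  rw [angle_eq_abs_arg hx hy, (arg_div_eq_sub_arg_iff hx hy).2 h]

theorem ceil_arg_div_mem_of_pi_div_three_lt_abs_arg {w : ℂ} (h : π / 3 < |w.arg|) :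
    ⌈w.arg / (π / 3)⌉ ∈ ({-2, -1, 2, 3} : Finset ℤ) := by
  have hπ : 0 < π / 3 := by positivity
  have hlo := Int.le_ceil (w.arg / (π / 3))
  have hhi := Int.ceil_lt_add_one (w.arg / (π / 3))
  have hk : (-3 : ℝ) < ⌈w.arg / (π / 3)⌉ ∧ (⌈w.arg / (π / 3)⌉ : ℝ) < 4 ∧
      ((1 : ℝ) < ⌈w.arg / (π / 3)⌉ ∨ (⌈w.arg / (π / 3)⌉ : ℝ) < 0) := by
    have h₁ : -3 < w.arg / (π / 3) := by rw [lt_div_iff₀ hπ]; linarith [neg_pi_lt_arg w]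
    have h₂ : w.arg / (π / 3) ≤ 3 := by rw [div_le_iff₀ hπ]; linarith [arg_le_pi w]
    refine ⟨by linarith, by linarith, ?_⟩
    rcases lt_abs.1 h with h | h
    · left; linarith [(lt_div_iff₀ hπ).2 (by linarith : 1 * (π / 3) < w.arg)]
    · right; linarith [(div_lt_iff₀ hπ).2 (by linarith : w.arg < -1 * (π / 3))]
  norm_cast at hk
  simp only [Finset.mem_insert, Finset.mem_singleton]
  omega

theorem card_le_five_of_one_mem_of_pairwise_pi_div_three_lt_angle {S : Finset ℂ}
    (h1 : 1 ∈ S) (h0 : 0 ∉ S) (hS : (S : Set ℂ).Pairwise fun u v => π / 3 < angle u v) :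
    S.card ≤ 5 := by
  have hne : ∀ w ∈ S, w ≠ 0 := fun w hw h => h0 (h ▸ hw)
  by_contra! hcard
  have hbucket : ∀ w ∈ S.erase 1, ⌈w.arg / (π / 3)⌉ ∈ ({-2, -1, 2, 3} : Finset ℤ) := by
    intro w hw
    obtain ⟨hw1, hwS⟩ := Finset.mem_erase.1 hw
    apply ceil_arg_div_mem_of_pi_div_three_lt_abs_arg
    rw [← angle_one_right (hne w hwS)]
    exact hS hwS h1 hw1
  obtain ⟨u, hu, v, hv, huv, hceil⟩ := Finset.exists_ne_map_eq_of_card_lt_of_maps_to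
    (by rw [Finset.card_erase_of_mem h1, show ({-2, -1, 2, 3} : Finset ℤ).card = 4 from rfl]; omega)
    hbucket
  have huS := Finset.mem_of_mem_erase hu
  have hvS := Finset.mem_of_mem_erase hv
  have hclose : |u.arg - v.arg| < π / 3 :=
    abs_sub_lt_of_ceil_div_eq_ceil_div (by positivity) hceil
  have hangle : angle u v = |u.arg - v.arg| := by
    refine angle_eq_abs_arg_sub (hne u huS) (hne v hvS) ⟨?_, ?_⟩ <;>
      linarith [abs_lt.1 hclose, pi_pos]
  exact (hS huS hvS huv).not_gt (hangle ▸ hclose)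

theorem card_le_five_of_pairwise_pi_div_three_lt_angle {S : Finset ℂ} (h0 : 0 ∉ S)
    (hS : (S : Set ℂ).Pairwise fun u v => π / 3 < angle u v) : S.card ≤ 5 := by
  obtain rfl | ⟨z, hz⟩ := S.eq_empty_or_nonempty
  · simp
  have hz0 : z ≠ 0 := fun h => h0 (h ▸ hz)
  have hinj : Function.Injective (· / z) := fun u v h => (div_left_inj' hz0).1 h
  rw [← Finset.card_image_of_injective S hinj]
  refine card_le_five_of_one_mem_of_pairwise_pi_div_three_lt_angle
    (Finset.mem_image.2 ⟨z, hz, div_self hz0⟩) ?_ ?_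
  · simpa [hz0] using h0
  · rw [Finset.coe_image]
    rintro _ ⟨u, hu, rfl⟩ _ ⟨v, hv, rfl⟩ huv
    simpa only [div_eq_mul_inv, angle_mul_right (inv_ne_zero hz0)] using
      hS hu hv (fun h => huv (h ▸ rfl))

end Complex

theorem card_le_five_of_close_and_separated_general (r : ℝ)
    (c : EuclideanSpace ℝ (Fin 2)) (X : Finset (EuclideanSpace ℝ (Fin 2)))
    (hclose : ∀ x ∈ X, dist c x < 2 * r)
    (hsep : ∀ x ∈ X, ∀ y ∈ X, x ≠ y → 2 * r ≤ dist x y) :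
    X.card ≤ 5 := by
  by_cases hc : c ∈ X
  · have hX : X ⊆ {c} := fun x hx => Finset.mem_singleton.2 <| by
      by_contra hxc
      exact (hsep c hc x hx (Ne.symm hxc)).not_gt (hclose x hx)
    exact (Finset.card_le_card hX).trans (by simp)
  set f := Complex.orthonormalBasisOneI.repr.symm.toLinearIsometry
  have hinj : Function.Injective fun x => f (x - c) :=
    fun x y h => sub_left_injective (f.injective h)
  rw [← Finset.card_image_of_injective X hinj]
  refine Complex.card_le_five_of_pairwise_pi_div_three_lt_angle ?_ ?_
  · rw [Finset.mem_image]
    rintro ⟨x, hx, hx0⟩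
    rw [map_eq_zero_iff f f.injective, sub_eq_zero] at hx0
    exact hc (hx0 ▸ hx)
  · rw [Finset.coe_image]
    rintro _ ⟨x, hx, rfl⟩ _ ⟨y, hy, rfl⟩ hxy
    rw [LinearIsometry.angle_map]
    refine pi_div_three_lt_angle_of_norm_lt_of_le_norm_sub (d := 2 * r) ?_ ?_ ?_
    · rw [← dist_eq_norm, dist_comm]; exact hclose x hx
    · rw [← dist_eq_norm, dist_comm]; exact hclose y hy
    · rw [sub_sub_sub_cancel_right, ← dist_eq_norm]
      exact hsep x hx y hy (fun h => hxy (h ▸ rfl))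

/-- If every point of a finite set `X` in the Euclidean plane is at distance `< 2r` from
`c`, and the points of `X` are pairwise at distance `≥ 2r` (with `r > 0`), then
`|X| ≤ 5`. -/
theorem card_le_five_of_close_and_separated (r : ℝ) (hr : 0 < r)
    (c : EuclideanSpace ℝ (Fin 2)) (X : Finset (EuclideanSpace ℝ (Fin 2)))
    (hclose : ∀ x ∈ X, dist c x < 2 * r)
    (hsep : ∀ x ∈ X, ∀ y ∈ X, x ≠ y → 2 * r ≤ dist x y) :
    X.card ≤ 5 :=
  card_le_five_of_close_and_separated_general r c X hclose hsep
end

section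
/- Let r > 0, let c ∈ ℝ², and let X be a finite set of points in ℝ² such that dist(c,x) = 2r for every x ∈ X and dist(x,x') ≥ 2r for all distinct x, x' ∈ X. Then |X| ≤ 6. -/
/-!
Identify the plane with `ℂ` and cut the directions around the centre into six sectors of angle
`π / 3` according to the argument. Among seven touching discs two centres lie in the same sector,
so they subtend an angle `< π / 3` at the centre, and by the law of cosines their distance is then
smaller than the common distance `2r` to the centre.
-/

open Real InnerProductGeometry

theorem norm_sub_lt_of_angle_lt_pi_div_three {V : Type*} [NormedAddCommGroup V]
    [InnerProductSpace ℝ V] {x y : V} (hxy : ‖x‖ = ‖y‖) (h : angle x y < π / 3) :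
    ‖x - y‖ < ‖x‖ := by
  have hx : x ≠ 0 := by
    rintro rfl
    rw [angle_zero_left] at h
    linarith [pi_pos]
  have hcos : 1 / 2 < cos (angle x y) := by
    rw [← cos_pi_div_three]
    exact cos_lt_cos_of_nonneg_of_le_pi (angle_nonneg x y) (by linarith [pi_pos]) h
  refine lt_of_mul_self_lt_mul_self₀ (norm_nonneg x) ?_
  rw [norm_sub_sq_eq_norm_sq_add_norm_sq_sub_two_mul_norm_mul_norm_mul_cos_angle, ← hxy]
  have hx2 : 0 < ‖x‖ * ‖x‖ := by positivity
  nlinarith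

namespace Complex

theorem angle_eq_abs_arg_sub_arg {z w : ℂ} (hz : z ≠ 0) (hw : w ≠ 0) (h : |arg z - arg w| < π) :
    angle z w = |arg z - arg w| := by
  rw [angle_eq_abs_arg hz hw, ← arg_coe_angle_toReal_eq_arg, arg_div_coe_angle hz hw,
    ← Real.Angle.coe_sub, Real.Angle.toReal_coe_eq_self_iff.mpr]
  constructor <;> linarith [abs_lt.mp h]

noncomputable def sextant (z : ℂ) : ℤ := ⌊(π - arg z) / (π / 3)⌋

theorem sextant_mem_Ico (z : ℂ) : sextant z ∈ Finset.Ico (0 : ℤ) 6 := by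
  have := pi_pos
  have h1 := neg_pi_lt_arg z
  have h2 := arg_le_pi z
  rw [Finset.mem_Ico, sextant, Int.floor_nonneg, Int.floor_lt, le_div_iff₀ (by positivity),
    div_lt_iff₀ (by positivity)]
  constructor <;> push_cast <;> linarith

theorem abs_arg_sub_arg_lt_of_sextant_eq {z w : ℂ} (h : sextant z = sextant w) :
    |arg z - arg w| < π / 3 := by
  have hπ : 0 < π / 3 := by positivity
  have := Int.abs_sub_lt_one_of_floor_eq_floor h
  rwa [← sub_div, sub_sub_sub_cancel_left, abs_div, abs_of_pos hπ, div_lt_one hπ,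
    abs_sub_comm] at this

theorem card_le_six_of_dist_eq_of_le_dist {S : Finset ℂ} {c : ℂ} {R : ℝ}
    (hS : ∀ z ∈ S, dist c z = R) (hsep : ∀ z ∈ S, ∀ w ∈ S, z ≠ w → R ≤ dist z w) :
    S.card ≤ 6 := by
  by_contra! hcard
  obtain ⟨z, hz, w, hw, hzw, hbin⟩ := Finset.exists_ne_map_eq_of_card_lt_of_maps_to
    (t := Finset.Ico (0 : ℤ) 6) (by simpa using hcard) fun z _ ↦ sextant_mem_Ico (z - c)
  have hnorm : ∀ u ∈ S, ‖u - c‖ = R := fun u hu ↦ by rw [← dist_eq_norm, dist_comm, hS u hu]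
  have hR : 0 < R := by
    by_contra! hR
    refine hzw ((sub_left_inj (a := c)).mp ?_)
    rw [norm_le_zero_iff.mp ((hnorm z hz).trans_le hR),
      norm_le_zero_iff.mp ((hnorm w hw).trans_le hR)]
  have hz0 : z - c ≠ 0 := norm_pos_iff.mp (hR.trans_eq (hnorm z hz).symm)
  have hw0 : w - c ≠ 0 := norm_pos_iff.mp (hR.trans_eq (hnorm w hw).symm)
  have harg := abs_arg_sub_arg_lt_of_sextant_eq hbin
  have hangle := angle_eq_abs_arg_sub_arg hz0 hw0 (harg.trans (by linarith [pi_pos]))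
  have hchord := norm_sub_lt_of_angle_lt_pi_div_three ((hnorm z hz).trans (hnorm w hw).symm)
    (hangle ▸ harg)
  rw [sub_sub_sub_cancel_right, ← dist_eq_norm, hnorm z hz] at hchord
  exact (hsep z hz w hw hzw).not_gt hchord

end Complex

theorem card_le_six_of_touching_and_separated_general (r : ℝ)
    (c : EuclideanSpace ℝ (Fin 2)) (X : Finset (EuclideanSpace ℝ (Fin 2)))
    (htouch : ∀ x ∈ X, dist c x = 2 * r)
    (hsep : ∀ x ∈ X, ∀ y ∈ X, x ≠ y → 2 * r ≤ dist x y) :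
    X.card ≤ 6 := by
  let e := Complex.orthonormalBasisOneI.repr.symm
  rw [← X.card_image_of_injective e.injective]
  refine Complex.card_le_six_of_dist_eq_of_le_dist (c := e c) (R := 2 * r) ?_ ?_
  · simpa using htouch
  · simpa using hsep

/-- If every point of a finite set `X` in the Euclidean plane is at distance exactly `2r`
from `c`, and the points of `X` are pairwise at distance `≥ 2r` (with `r > 0`), then
`|X| ≤ 6`. -/
theorem card_le_six_of_touching_and_separated (r : ℝ) (hr : 0 < r)
    (c : EuclideanSpace ℝ (Fin 2)) (X : Finset (EuclideanSpace ℝ (Fin 2)))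
    (htouch : ∀ x ∈ X, dist c x = 2 * r)
    (hsep : ∀ x ∈ X, ∀ y ∈ X, x ≠ y → 2 * r ≤ dist x y) :
    X.card ≤ 6 :=
  card_le_six_of_touching_and_separated_general r c X htouch hsep
end

section
/- Let n ≥ 1 and let D_n be the digraph on the 2n vertices u_1, v_1, …, u_n, v_n whose arcs are exactly (u_i, v_i) and (v_i, u_i) for 1 ≤ i ≤ n (the disjoint union of n bidirected 2-cycles). Then the minimum size of a feedback vertex set of D_n equals n. Together with MRB(D_n) = 1, this shows the gap between the minimum feedback vertex set size and the minimum number of running buffers can be arbitrarily large. -/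
open scoped Classical

/-- `W` is a feedback vertex set of the digraph with arc relation `A` if no vertex outside
`W` is reachable from itself by a nonempty directed walk avoiding `W`. -/
def IsFVS {V : Type*} (A : V → V → Prop) (W : Finset V) : Prop :=
  ∀ x : V, ¬ Relation.TransGen (fun a b => a ∉ W ∧ b ∉ W ∧ A a b) x x

/-- The minimum cardinality of a feedback vertex set of the digraph with arc relation `A`. -/
noncomputable def MFVS {V : Type*} (A : V → V → Prop) : ℕ :=
  sInf {k | ∃ W : Finset V, IsFVS A W ∧ W.card = k}

/-- The digraph `D_n` on `2n` vertices `(i, 0) = u_i` and `(i, 1) = v_i` whose arcs are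
exactly `(u_i, v_i)` and `(v_i, u_i)`: the disjoint union of `n` bidirected `2`-cycles. -/
def twoCycles (n : ℕ) : (Fin n × Fin 2) → (Fin n × Fin 2) → Prop :=
  fun a b => a.1 = b.1 ∧ a.2 ≠ b.2

/-!
A feedback vertex set must meet every 2-cycle `{u_i, v_i}`, so it has at least `n` vertices,
and `{u_1, …, u_n}` is one. Every ordering needs a buffer for its first vertex, since its
partner comes later. In the ordering `u_1, v_1, u_2, v_2, …` a prefix has a buffered vertex
only when it ends with some `u_i`, and then `u_i` is the only one, so a single buffer suffices.
-/

open Finset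

section General

variable {V : Type*}

theorem IsFVS.of_forall_arc {A : V → V → Prop} {W : Finset V}
    (h : ∀ a b, A a b → a ∈ W ∨ b ∈ W) : IsFVS A W := by
  intro x hx
  obtain ⟨b, ⟨hx, hb, hxb⟩, -⟩ := Relation.TransGen.head'_iff.mp hx
  exact (h x b hxb).elim hx hb

theorem IsFVS.mem_or_mem {A : V → V → Prop} {W : Finset V} (hW : IsFVS A W) {a b : V}
    (hab : A a b) (hba : A b a) : a ∈ W ∨ b ∈ W := by
  by_contra! h
  exact hW a (.head ⟨h.1, h.2, hab⟩ (.single ⟨h.2, h.1, hba⟩))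

-- Quantifying over `P` and `Q` spares callers from matching the classical `DecidableEq`
-- instance with which `RB` forms its prefixes.
theorem RB_le_of_forall_prefix [Fintype V] {A : V → V → Prop} {N : ℕ} (φ : Fin N ≃ V) {k : ℕ}
    (h : ∀ i, ∀ P Q : Finset V, (∀ x, x ∈ P ↔ φ.symm x < i) → (∀ x, x ∈ Q ↔ φ.symm x ≤ i) →
      #(buffered A P) + (if φ i ∈ buffered A Q then 1 else 0) ≤ k) :
    RB A φ ≤ k :=
  Finset.sup_le fun i _ => h i _ _
    (fun x => by simp only [mem_image, mem_filter, mem_univ, true_and, ← φ.eq_symm_apply,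
      exists_eq_right])
    (fun x => by simp only [mem_image, mem_filter, mem_univ, true_and, ← φ.eq_symm_apply,
      exists_eq_right])

theorem one_le_RB [Fintype V] {A : V → V → Prop} (hA : ∀ u, ∃ v, v ≠ u ∧ A u v) {N : ℕ}
    (hN : 0 < N) (φ : Fin N → V) : 1 ≤ RB A φ := by
  set i : Fin N := ⟨0, hN⟩
  obtain ⟨v, hv, hiv⟩ := hA (φ i)
  have hmem : φ i ∈ buffered A ((univ.filter fun j => j ≤ i).image φ) := by
    refine mem_filter.mpr ⟨mem_image_of_mem φ (by simp), v, ?_, hiv⟩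
    simp only [mem_image, mem_filter, mem_univ, true_and, not_exists, not_and]
    intro j hj hjv
    exact hv (hjv ▸ congrArg φ (Fin.ext (Nat.le_zero.mp hj)))
  unfold RB
  refine le_trans ?_ (le_sup (mem_univ i))
  simp only [if_pos hmem]
  omega

end General

namespace twoCycles

variable {n : ℕ}

theorem isFVS_univ_product_zero : IsFVS (twoCycles n) (univ ×ˢ {0}) :=
  IsFVS.of_forall_arc fun a b ⟨_, hab⟩ => by
    simp only [mem_product, mem_univ, mem_singleton, true_and]
    omega

theorem le_card_of_isFVS {W : Finset (Fin n × Fin 2)} (hW : IsFVS (twoCycles n) W) :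
    n ≤ W.card := by
  have hfst : W.image Prod.fst = univ := by
    refine eq_univ_of_forall fun i => ?_
    rcases hW.mem_or_mem (a := (i, 0)) (b := (i, 1)) ⟨rfl, by simp⟩ ⟨rfl, by simp⟩ with h | h <;>
      exact mem_image_of_mem _ h
  calc n = (W.image Prod.fst).card := by simp [hfst]
    _ ≤ W.card := card_image_le

/-- The ordering `u_1, v_1, u_2, v_2, …`: vertex `(i, j)` comes at position `2 i + j`. -/
def order (n : ℕ) : Fin (Fintype.card (Fin n × Fin 2)) ≃ Fin n × Fin 2 :=
  (finCongr (by simp)).trans finProdFinEquiv.symm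

theorem order_symm_apply_val (x : Fin n × Fin 2) :
    ((order n).symm x : ℕ) = 2 * x.1 + x.2 := by
  simp [order, finProdFinEquiv_apply_val]
  omega

theorem mem_buffered_iff {S : Finset (Fin n × Fin 2)} {m : ℕ}
    (hS : ∀ x, x ∈ S ↔ 2 * (x.1 : ℕ) + x.2 < m) (u : Fin n × Fin 2) :
    u ∈ buffered (twoCycles n) S ↔ u.2 = 0 ∧ m = 2 * u.1 + 1 := by
  simp only [buffered, mem_filter, twoCycles, hS]
  constructor
  · rintro ⟨hu, v, hv, huv, hne⟩
    rw [← huv] at hv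
    omega
  · rintro ⟨hu0, hm⟩
    refine ⟨by omega, (u.1, 1), by simp [hm], rfl, by simp [hu0]⟩

theorem card_buffered_le_one {S : Finset (Fin n × Fin 2)} {m : ℕ}
    (hS : ∀ x, x ∈ S ↔ 2 * (x.1 : ℕ) + x.2 < m) : (buffered (twoCycles n) S).card ≤ 1 := by
  refine card_le_one.mpr fun a ha b hb => ?_
  rw [mem_buffered_iff hS] at ha hb
  ext <;> omega

theorem buffered_eq_empty {S : Finset (Fin n × Fin 2)} {m : ℕ}
    (hS : ∀ x, x ∈ S ↔ 2 * (x.1 : ℕ) + x.2 < m) (hm : Even m) : buffered (twoCycles n) S = ∅ :=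
  eq_empty_of_forall_notMem fun u hu => by
    rw [mem_buffered_iff hS] at hu
    obtain ⟨r, hr⟩ := hm
    omega

theorem RB_order_le_one : RB (twoCycles n) (order n) ≤ 1 := by
  refine RB_le_of_forall_prefix _ fun i P Q hP hQ => ?_
  replace hP x : x ∈ P ↔ 2 * (x.1 : ℕ) + x.2 < i := by rw [hP, Fin.lt_def, order_symm_apply_val]
  replace hQ x : x ∈ Q ↔ 2 * (x.1 : ℕ) + x.2 < i + 1 := by
    rw [hQ, Fin.le_def, order_symm_apply_val, Nat.lt_succ_iff]
  split_ifs with hi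
  · rw [mem_buffered_iff hQ] at hi
    rw [buffered_eq_empty hP ⟨(order n i).1, by omega⟩, card_empty]
  · simpa using card_buffered_le_one hP

theorem exists_ne_and_arc (u : Fin n × Fin 2) : ∃ v, v ≠ u ∧ twoCycles n u v := by
  have hrev : u.2 ≠ u.2.rev := by rw [Ne, Fin.ext_iff, Fin.val_rev]; omega
  exact ⟨(u.1, u.2.rev), by simp [Prod.ext_iff, hrev.symm], rfl, hrev⟩

theorem MFVS_eq : MFVS (twoCycles n) = n :=
  IsLeast.csInf_eq
    ⟨⟨_, isFVS_univ_product_zero, by simp⟩, fun _ ⟨_, hW, hk⟩ => hk ▸ le_card_of_isFVS hW⟩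

theorem MRB_eq (hn : 1 ≤ n) : MRB (twoCycles n) = 1 := by
  have hN : 0 < Fintype.card (Fin n × Fin 2) := by simp; omega
  refine IsLeast.csInf_eq ⟨⟨order n, (order n).bijective, ?_⟩, ?_⟩
  · exact le_antisymm RB_order_le_one (one_le_RB exists_ne_and_arc hN _)
  · rintro _ ⟨φ, -, rfl⟩
    exact one_le_RB exists_ne_and_arc hN φ

end twoCycles

/-- For the disjoint union `D_n` of `n ≥ 1` bidirected `2`-cycles, the minimum feedback
vertex set has size `n`, while `MRB(D_n) = 1`; so the gap between the two quantities can
be arbitrarily large. -/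
theorem mfvs_two_cycles (n : ℕ) (hn : 1 ≤ n) :
    MFVS (twoCycles n) = n ∧ MRB (twoCycles n) = 1 :=
  ⟨twoCycles.MFVS_eq, twoCycles.MRB_eq hn⟩
end
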